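/- Let f, c_1,…,c_m : ℝⁿ → ℝ be differentiable with ∇f (L,κ)-Hölder continuous and each ∇c_i (L_i,κ_i)-Hölder continuous, and let r : ℝⁿ → ℝ be convex. Fix x ∈ ℝⁿ with c_i(x) ≤ 0 for all i, constants δ, δ', M, M_1,…,M_m > 0, and assume: (i) with I(x) := {i : c_i(x) ≥ −δ}, the matrix J_{I(x)}(x) whose rows are ∇c_i(x)ᵀ for i ∈ I(x) has smallest singular value σ_min(J_{I(x)}(x)) ≥ δ'; (ii) ‖∇c_i(x)‖ ≤ M_i for all i. Suppose z* ∈ ℝⁿ, λ ∈ ℝ^m_{≥0} and l ∈ ∂r(z*) satisfy, with d = z* − x: ∇f(x) + l + 2L‖d‖^{κ−1}d + Σ_{i=1}^m λ_i(∇c_i(x) + L_i‖d‖^{κ_i−1}d) = 0, c_i(x) + ∇c_i(x)ᵀd + (L_i/(κ_i+1))‖d‖^{κ_i+1} ≤ 0 and λ_i·(c_i(x) + ∇c_i(x)ᵀd + (L_i/(κ_i+1))‖d‖^{κ_i+1}) = 0 for all i, and ‖∇f(x) + l‖ ≤ M. If ‖d‖ ≤ ρ for some ρ > 0 with max_{i∈[m]}{M_iρ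 + (L_i/(κ_i+1))ρ^{κ_i+1}} ≤ δ and Σ_{j=1}^m L_jρ^{κ_j} ≤ δ'/2, then λ_i = 0 for every i ∉ I(x) and ‖λ‖_∞ ≤ 2(M + 2Lρ^κ)/δ'. -/

import Mathlib

/-!
A multiplier of a constraint with `cᵢ(x) < -δ` vanishes by complementary slackness: for
`‖d‖ ≤ ρ` the Hölder model `cᵢ(x) + ⟪∇cᵢ(x), d⟫ + …` of that constraint stays below
`cᵢ(x) + δ < 0`. So `λ` is supported on `I(x)` and the singular-value bound gives
`δ'‖λ‖ ≤ ‖Σ λᵢ ∇cᵢ(x)‖`. Stationarity expresses `Σ λᵢ ∇cᵢ(x)` through `∇f(x) + l` and the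
regularization terms, whose norms are at most `M`, `2Lρ^κ` and `‖λ‖ Σ Lⱼ ρ^κⱼ ≤ ‖λ‖ δ'/2`;
absorbing the last one on the left gives `‖λ‖_∞ ≤ ‖λ‖ ≤ 2(M + 2Lρ^κ)/δ'`.
-/

open scoped RealInnerProductSpace
open Real Set

/-- The convex subdifferential of `r` at `u`. -/
def subgrad {n : ℕ} (r : EuclideanSpace ℝ (Fin n) → ℝ)
    (u : EuclideanSpace ℝ (Fin n)) : Set (EuclideanSpace ℝ (Fin n)) :=
  {l | ∀ z, r u + ⟪l, z - u⟫ ≤ r z}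

section NormedSpace

variable {E : Type*} [SeminormedAddCommGroup E] [NormedSpace ℝ E]

theorem norm_mul_rpow_sub_one_smul_le {a t ρ : ℝ} {v : E} (ha : 0 ≤ a) (ht : 0 ≤ t)
    (hv : ‖v‖ ≤ ρ) : ‖(a * ‖v‖ ^ (t - 1)) • v‖ ≤ a * ρ ^ t := by
  have hρ : 0 ≤ ρ := (norm_nonneg v).trans hv
  rw [norm_smul, Real.norm_of_nonneg (by positivity), mul_assoc]
  rcases (norm_nonneg v).eq_or_lt with hv0 | hv0
  · rw [← hv0, mul_zero, mul_zero]
    positivity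
  · rw [rpow_sub_one hv0.ne', div_mul_cancel₀ _ hv0.ne']
    gcongr

theorem norm_sum_smul_le_of_add_sum_smul_add_eq_zero {ι : Type*} [Fintype ι] {g : E}
    {lam : ι → ℝ} {v w : ι → E} (h : g + ∑ i, lam i • (v i + w i) = 0) :
    ‖∑ i, lam i • v i‖ ≤ ‖g‖ + ‖∑ i, lam i • w i‖ := by
  have hsum : ∑ i, lam i • v i = -(g + ∑ i, lam i • w i) := by
    rw [eq_neg_iff_add_eq_zero, ← h]
    simp only [smul_add, Finset.sum_add_distrib]
    abel
  rw [hsum, norm_neg]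
  exact norm_add_le _ _

theorem norm_sum_smul_le_mul_sum {ι : Type*} [Fintype ι] {lam β : ι → ℝ} {w : ι → E} {B : ℝ}
    (hlam : ∀ i, |lam i| ≤ B) (hw : ∀ i, ‖w i‖ ≤ β i) :
    ‖∑ i, lam i • w i‖ ≤ B * ∑ i, β i := by
  rw [Finset.mul_sum]
  refine (norm_sum_le _ _).trans (Finset.sum_le_sum fun i _ => ?_)
  rw [norm_smul, Real.norm_eq_abs]
  exact mul_le_mul (hlam i) (hw i) (norm_nonneg _) ((abs_nonneg _).trans (hlam i))

end NormedSpace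

theorem add_inner_add_mul_rpow_lt_zero {E : Type*} [SeminormedAddCommGroup E]
    [InnerProductSpace ℝ E] {c δ M a p ρ : ℝ} {g d : E} (hc : c < -δ) (hg : ‖g‖ ≤ M)
    (ha : 0 ≤ a) (hp : 0 ≤ p) (hd : ‖d‖ ≤ ρ) (hδ : M * ρ + a * ρ ^ p ≤ δ) :
    c + ⟪g, d⟫ + a * ‖d‖ ^ p < 0 := by
  have hinner : ⟪g, d⟫ ≤ M * ρ :=
    (real_inner_le_norm g d).trans
      (mul_le_mul hg hd (norm_nonneg d) ((norm_nonneg g).trans hg))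
  have hrpow : a * ‖d‖ ^ p ≤ a * ρ ^ p := by
    gcongr
  linarith

theorem gen_licq_dual_bound_general {n m : ℕ}
    (c : Fin m → EuclideanSpace ℝ (Fin n) → ℝ)
    (f' : EuclideanSpace ℝ (Fin n) → EuclideanSpace ℝ (Fin n))
    (c' : Fin m → EuclideanSpace ℝ (Fin n) → EuclideanSpace ℝ (Fin n))
    (L κ : ℝ) (Li κi : Fin m → ℝ)
    (hκ0 : 0 < κ) (hκi0 : ∀ i, 0 < κi i)
    (hL : 0 < L) (hLi : ∀ i, 0 < Li i)
    -- the base point and the constants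
    (x : EuclideanSpace ℝ (Fin n))
    (δ δ' M : ℝ) (Mi : Fin m → ℝ)
    (hδ' : 0 < δ')
    -- (i) σ_min of the matrix with rows ∇cᵢ(x)ᵀ, i ∈ I(x), is ≥ δ'
    (hσ : ∀ u : EuclideanSpace ℝ (Fin m), (∀ i, c i x < -δ → u i = 0) →
      δ' * ‖u‖ ≤ ‖∑ i, u i • c' i x‖)
    -- (ii) gradient bounds
    (hgradbnd : ∀ i, ‖c' i x‖ ≤ Mi i)
    -- KKT data of the surrogate subproblem at `x`
    (zstar : EuclideanSpace ℝ (Fin n))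
    (lam : Fin m → ℝ)
    (l : EuclideanSpace ℝ (Fin n))
    (hstat : f' x + l + (2 * L * ‖zstar - x‖ ^ (κ - 1)) • (zstar - x) +
      ∑ i, lam i • (c' i x + (Li i * ‖zstar - x‖ ^ (κi i - 1)) • (zstar - x)) = 0)
    (hcomp : ∀ i, lam i * (c i x + ⟪c' i x, zstar - x⟫ +
      (Li i / (κi i + 1)) * ‖zstar - x‖ ^ (κi i + 1)) = 0)
    (hMbound : ‖f' x + l‖ ≤ M)
    -- smallness of the residual
    (ρ : ℝ) (hd : ‖zstar - x‖ ≤ ρ)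
    (hρδ : ∀ i, Mi i * ρ + (Li i / (κi i + 1)) * ρ ^ (κi i + 1) ≤ δ)
    (hρδ' : ∑ j, Li j * ρ ^ (κi j) ≤ δ' / 2) :
    (∀ i, c i x < -δ → lam i = 0) ∧ ∀ i, lam i ≤ 2 * (M + 2 * L * ρ ^ κ) / δ' := by
  have hinactive : ∀ i, c i x < -δ → lam i = 0 := fun i hi =>
    have hκi1 : 0 < κi i + 1 := by linarith [hκi0 i]
    (mul_eq_zero.mp (hcomp i)).resolve_right <| ne_of_lt <|
      add_inner_add_mul_rpow_lt_zero hi (hgradbnd i) (div_nonneg (hLi i).le hκi1.le) hκi1.le hd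
        (hρδ i)
  refine ⟨hinactive, fun i => ?_⟩
  set u : EuclideanSpace ℝ (Fin m) := WithLp.toLp 2 lam
  have hlam_le : ∀ i, |lam i| ≤ ‖u‖ := fun i => by
    simpa [u] using PiLp.norm_apply_le u i
  have hu : δ' * ‖u‖ ≤ M + 2 * L * ρ ^ κ + ‖u‖ * (δ' / 2) :=
    calc δ' * ‖u‖ ≤ ‖∑ i, lam i • c' i x‖ := hσ u hinactive
      _ ≤ ‖f' x + l + (2 * L * ‖zstar - x‖ ^ (κ - 1)) • (zstar - x)‖ +
          ‖∑ i, lam i • ((Li i * ‖zstar - x‖ ^ (κi i - 1)) • (zstar - x))‖ :=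
        norm_sum_smul_le_of_add_sum_smul_add_eq_zero hstat
      _ ≤ M + 2 * L * ρ ^ κ + ‖u‖ * ∑ i, Li i * ρ ^ κi i := by
        gcongr
        · exact (norm_add_le _ _).trans
            (add_le_add hMbound (norm_mul_rpow_sub_one_smul_le (by linarith) hκ0.le hd))
        · exact norm_sum_smul_le_mul_sum hlam_le fun i =>
            norm_mul_rpow_sub_one_smul_le (hLi i).le (hκi0 i).le hd
      _ ≤ M + 2 * L * ρ ^ κ + ‖u‖ * (δ' / 2) := by gcongr
  have hu_le : ‖u‖ ≤ 2 * (M + 2 * L * ρ ^ κ) / δ' := by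
    rw [le_div_iff₀ hδ']
    linarith
  exact (le_abs_self _).trans ((hlam_le i).trans hu_le)

/-- (Proposition 2 in the paper.) Under gradient Hölder continuity,
a uniform LICQ-type condition on the near-active constraint gradients implies that the
multipliers of the surrogate subproblem vanish on inactive constraints and are bounded
by `2(M + 2Lρ^κ)/δ'`.  The smallest-singular-value condition on the matrix whose rows
are `∇cᵢ(x)ᵀ`, `i ∈ I(x) = {i : cᵢ(x) ≥ −δ}`, is expressed as
`δ'‖u‖ ≤ ‖Σᵢ uᵢ ∇cᵢ(x)‖` for every vector `u` supported on `I(x)`. -/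
theorem gen_licq_dual_bound {n m : ℕ}
    (f r : EuclideanSpace ℝ (Fin n) → ℝ)
    (c : Fin m → EuclideanSpace ℝ (Fin n) → ℝ)
    (f' : EuclideanSpace ℝ (Fin n) → EuclideanSpace ℝ (Fin n))
    (c' : Fin m → EuclideanSpace ℝ (Fin n) → EuclideanSpace ℝ (Fin n))
    (hf : ∀ x, HasGradientAt f (f' x) x)
    (hc : ∀ i x, HasGradientAt (c i) (c' i x) x)
    (hrconv : ConvexOn ℝ univ r)
    (L κ : ℝ) (Li κi : Fin m → ℝ)
    (hκ0 : 0 < κ) (hκ1 : κ ≤ 1) (hκi0 : ∀ i, 0 < κi i) (hκi1 : ∀ i, κi i ≤ 1)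
    (hL : 0 < L) (hLi : ∀ i, 0 < Li i)
    (hfholder : ∀ x y, ‖f' x - f' y‖ ≤ L * ‖x - y‖ ^ κ)
    (hcholder : ∀ i x y, ‖c' i x - c' i y‖ ≤ Li i * ‖x - y‖ ^ (κi i))
    -- the base point and the constants
    (x : EuclideanSpace ℝ (Fin n)) (hxfeas : ∀ i, c i x ≤ 0)
    (δ δ' M : ℝ) (Mi : Fin m → ℝ)
    (hδ : 0 < δ) (hδ' : 0 < δ') (hM : 0 < M) (hMi : ∀ i, 0 < Mi i)
    -- (i) σ_min of the matrix with rows ∇cᵢ(x)ᵀ, i ∈ I(x), is ≥ δ'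
    (hσ : ∀ u : EuclideanSpace ℝ (Fin m), (∀ i, c i x < -δ → u i = 0) →
      δ' * ‖u‖ ≤ ‖∑ i, u i • c' i x‖)
    -- (ii) gradient bounds
    (hgradbnd : ∀ i, ‖c' i x‖ ≤ Mi i)
    -- KKT data of the surrogate subproblem at `x`
    (zstar : EuclideanSpace ℝ (Fin n))
    (lam : Fin m → ℝ) (hlam : ∀ i, 0 ≤ lam i)
    (l : EuclideanSpace ℝ (Fin n)) (hl : l ∈ subgrad r zstar)
    (hstat : f' x + l + (2 * L * ‖zstar - x‖ ^ (κ - 1)) • (zstar - x) +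
      ∑ i, lam i • (c' i x + (Li i * ‖zstar - x‖ ^ (κi i - 1)) • (zstar - x)) = 0)
    (hconstr : ∀ i, c i x + ⟪c' i x, zstar - x⟫ +
      (Li i / (κi i + 1)) * ‖zstar - x‖ ^ (κi i + 1) ≤ 0)
    (hcomp : ∀ i, lam i * (c i x + ⟪c' i x, zstar - x⟫ +
      (Li i / (κi i + 1)) * ‖zstar - x‖ ^ (κi i + 1)) = 0)
    (hMbound : ‖f' x + l‖ ≤ M)
    -- smallness of the residual
    (ρ : ℝ) (hρ : 0 < ρ) (hd : ‖zstar - x‖ ≤ ρ)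
    (hρδ : ∀ i, Mi i * ρ + (Li i / (κi i + 1)) * ρ ^ (κi i + 1) ≤ δ)
    (hρδ' : ∑ j, Li j * ρ ^ (κi j) ≤ δ' / 2) :
    (∀ i, c i x < -δ → lam i = 0) ∧ ∀ i, lam i ≤ 2 * (M + 2 * L * ρ ^ κ) / δ' :=
  gen_licq_dual_bound_general c f' c' L κ Li κi hκ0 hκi0 hL hLi x δ δ' M Mi hδ' hσ hgradbnd zstar
    lam l hstat hcomp hMbound ρ hd hρδ hρδ'
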